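/- In the braid group B₃, any word of the form σ₂^{k₁} σ₁^{l₁} ⋯ σ₂^{k_m} σ₁^{l_m} σ₂^n σ₁ with all kᵢ > 0, all lᵢ < 0, and n > 1, can be rewritten (using the braid relation) into a word in which the generator σ₁ occurs only with positive exponents. -/

import Mathlib

/-- The braid relation σ₁σ₂σ₁ = σ₂σ₁σ₂ as a relator in the free group on two generators. -/
def braidRels3 : Set (FreeGroup (Fin 2)) :=
  {FreeGroup.of 0 * FreeGroup.of 1 * FreeGroup.of 0 *
    (FreeGroup.of 1 * FreeGroup.of 0 * FreeGroup.of 1)⁻¹}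

/-- The braid group B₃ on three strands. -/
def B3 : Type := PresentedGroup braidRels3

instance : Group B3 := by unfold B3; infer_instance

/-- The standard generators σ₁ = σ 0 and σ₂ = σ 1 of B₃. -/
def σ (i : Fin 2) : B3 := PresentedGroup.of i

/-- Evaluate a signed word in the generators: `(i, true)` stands for `σ i`,
`(i, false)` for `(σ i)⁻¹`. -/
def evalWord (w : List (Fin 2 × Bool)) : B3 :=
  (w.map fun p => if p.2 then σ p.1 else (σ p.1)⁻¹).prod

/-- A word is 1-positive if the generator σ₁ (index 0) occurs in it, and only
with positive exponent. -/
def OnePositive (w : List (Fin 2 × Bool)) : Prop :=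
  ((0 : Fin 2), false) ∉ w ∧ ((0 : Fin 2), true) ∈ w

/-!
Let `M = σ0Nonneg` be the submonoid of `B₃` generated by `σ₁`, `σ₂` and `σ₂⁻¹`, i.e. the braids
represented by words without `σ₁⁻¹`. Reading the word from the right, it suffices to keep the
invariant `g ∈ σ₂^d σ₁ M` with `d ≥ 1`. It starts with `σ₂^n σ₁`, and it survives left
multiplication by `σ₂^k σ₁^l` for `k ≥ 0` and any `l`, thanks to the identity
`σ₁^l σ₂^d σ₁ = σ₂ σ₁ · σ₂^(l+1) σ₁^(d-1) σ₂⁻¹`, which follows from the braid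
relation in the forms `(σ₁σ₂)σ₁ = σ₂(σ₁σ₂)`, `(σ₂σ₁)σ₂ = σ₁(σ₂σ₁)`.
-/

lemma σ_braid : σ 0 * σ 1 * σ 0 = σ 1 * σ 0 * σ 1 := by
  have h := PresentedGroup.mk_eq_mk_of_mul_inv_mem (rels := braidRels3) (Set.mem_singleton _)
  rw [map_mul, map_mul, map_mul, map_mul] at h
  exact h

lemma semiconjBy_σ0_mul_σ1 : SemiconjBy (σ 0 * σ 1) (σ 0) (σ 1) := by
  rw [SemiconjBy, σ_braid, mul_assoc]

lemma semiconjBy_σ1_mul_σ0 : SemiconjBy (σ 1 * σ 0) (σ 1) (σ 0) := by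
  rw [SemiconjBy, ← σ_braid, mul_assoc]

lemma σ0_zpow_mul_σ1_zpow_mul_σ0 (l d : ℤ) :
    σ 0 ^ l * σ 1 ^ d * σ 0 = σ 1 * σ 0 * (σ 1 ^ (l + 1) * σ 0 ^ (d - 1) * (σ 1)⁻¹) := by
  have h₁ := semiconjBy_σ0_mul_σ1.zpow_right d
  have h₂ := semiconjBy_σ1_mul_σ0.zpow_right (l + 1)
  calc σ 0 ^ l * σ 1 ^ d * σ 0 = σ 0 ^ l * (σ 1 ^ d * (σ 0 * σ 1)) * (σ 1)⁻¹ := by group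
    _ = σ 0 ^ (l + 1) * (σ 1 * σ 0) * (σ 0 ^ (d - 1) * (σ 1)⁻¹) := by rw [← h₁]; group
    _ = σ 1 * σ 0 * (σ 1 ^ (l + 1) * σ 0 ^ (d - 1) * (σ 1)⁻¹) := by rw [← h₂]; group

def σ0Nonneg : Submonoid B3 := Submonoid.closure {σ 0, σ 1, (σ 1)⁻¹}

lemma σ0_zpow_mem_σ0Nonneg {e : ℤ} (he : 0 ≤ e) : σ 0 ^ e ∈ σ0Nonneg := by
  lift e to ℕ using he
  exact zpow_natCast (σ 0) e ▸ pow_mem (Submonoid.subset_closure (by simp)) e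

lemma σ1_zpow_mem_σ0Nonneg (e : ℤ) : σ 1 ^ e ∈ σ0Nonneg := by
  induction e using Int.induction_on with
  | zero => rw [zpow_zero]; exact one_mem _
  | succ e ih => rw [zpow_add_one]; exact mul_mem ih (Submonoid.subset_closure (by simp))
  | pred e ih => rw [zpow_sub_one]; exact mul_mem ih (Submonoid.subset_closure (by simp))

lemma evalWord_append (u v : List (Fin 2 × Bool)) :
    evalWord (u ++ v) = evalWord u * evalWord v := by
  simp [evalWord]

lemma exists_evalWord_eq_of_mem_σ0Nonneg {g : B3} (hg : g ∈ σ0Nonneg) :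
    ∃ w, ((0 : Fin 2), false) ∉ w ∧ evalWord w = g := by
  induction hg using Submonoid.closure_induction with
  | mem g hg =>
    rcases hg with rfl | rfl | rfl
    · exact ⟨[(0, true)], by simp, by simp [evalWord]⟩
    · exact ⟨[(1, true)], by simp, by simp [evalWord]⟩
    · exact ⟨[(1, false)], by simp, by simp [evalWord]⟩
  | one => exact ⟨[], by simp, by simp [evalWord]⟩
  | mul g h _ _ ihg ihh =>
    obtain ⟨u, hu, rfl⟩ := ihg
    obtain ⟨v, hv, rfl⟩ := ihh
    exact ⟨u ++ v, by simp [hu, hv], evalWord_append u v⟩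

def σ1PowMulσ0Mul (g : B3) : Prop := ∃ d : ℤ, 1 ≤ d ∧ ∃ x ∈ σ0Nonneg, g = σ 1 ^ d * σ 0 * x

lemma σ1PowMulσ0Mul.σ1_zpow_mul_σ0 {n : ℤ} (hn : 1 ≤ n) : σ1PowMulσ0Mul (σ 1 ^ n * σ 0) :=
  ⟨n, hn, 1, one_mem _, (mul_one _).symm⟩

lemma σ1PowMulσ0Mul.σ1_zpow_mul_σ0_zpow_mul {g : B3} (hg : σ1PowMulσ0Mul g) {k : ℤ} (hk : 0 ≤ k)
    (l : ℤ) :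
    σ1PowMulσ0Mul (σ 1 ^ k * σ 0 ^ l * g) := by
  obtain ⟨d, hd, x, hx, rfl⟩ := hg
  refine ⟨k + 1, by omega, σ 1 ^ (l + 1) * σ 0 ^ (d - 1) * (σ 1)⁻¹ * x, ?_, ?_⟩
  · exact mul_mem (mul_mem (mul_mem (σ1_zpow_mem_σ0Nonneg _)
      (σ0_zpow_mem_σ0Nonneg (by omega))) (Submonoid.subset_closure (by simp))) hx
  · calc σ 1 ^ k * σ 0 ^ l * (σ 1 ^ d * σ 0 * x)
        = σ 1 ^ k * (σ 0 ^ l * σ 1 ^ d * σ 0) * x := by group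
      _ = _ := by rw [σ0_zpow_mul_σ1_zpow_mul_σ0]; group

lemma σ1PowMulσ0Mul.list_prod_mul {g : B3} (hg : σ1PowMulσ0Mul g) (L : List B3)
    (hL : ∀ x ∈ L, ∃ k : ℤ, 0 ≤ k ∧ ∃ l : ℤ, x = σ 1 ^ k * σ 0 ^ l) :
    σ1PowMulσ0Mul (L.prod * g) := by
  induction L with
  | nil => simpa using hg
  | cons x L ih =>
    obtain ⟨k, hk, l, rfl⟩ := hL x List.mem_cons_self
    rw [List.prod_cons, mul_assoc]
    exact (ih fun y hy => hL y (List.mem_cons_of_mem _ hy)).σ1_zpow_mul_σ0_zpow_mul hk l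

lemma σ1PowMulσ0Mul.exists_onePositive {g : B3} (hg : σ1PowMulσ0Mul g) :
    ∃ w, OnePositive w ∧ evalWord w = g := by
  obtain ⟨d, -, x, hx, rfl⟩ := hg
  obtain ⟨u, hu, hu_eq⟩ := exists_evalWord_eq_of_mem_σ0Nonneg (σ1_zpow_mem_σ0Nonneg d)
  obtain ⟨v, hv, rfl⟩ := exists_evalWord_eq_of_mem_σ0Nonneg hx
  refine ⟨u ++ (0, true) :: v, ⟨by simp [hu, hv], by simp⟩, ?_⟩
  rw [evalWord_append, ← hu_eq, mul_assoc]
  simp [evalWord]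

theorem stmt_11_general (m : ℕ) (k l : Fin m → ℤ) (hk : ∀ i, 0 < k i)
    (n : ℤ) (hn : 1 < n) :
    ∃ w : List (Fin 2 × Bool), OnePositive w ∧
      evalWord w =
        ((List.finRange m).map fun i => (σ 1) ^ k i * (σ 0) ^ l i).prod *
          (σ 1) ^ n * σ 0 := by
  rw [mul_assoc]
  refine σ1PowMulσ0Mul.exists_onePositive
    ((σ1PowMulσ0Mul.σ1_zpow_mul_σ0 hn.le).list_prod_mul _ ?_)
  simp only [List.mem_map, List.mem_finRange, true_and]
  rintro _ ⟨i, rfl⟩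
  exact ⟨k i, (hk i).le, l i, rfl⟩

theorem stmt_11 (m : ℕ) (k l : Fin m → ℤ) (hk : ∀ i, 0 < k i) (hl : ∀ i, l i < 0)
    (n : ℤ) (hn : 1 < n) :
    ∃ w : List (Fin 2 × Bool), OnePositive w ∧
      evalWord w =
        ((List.finRange m).map fun i => (σ 1) ^ k i * (σ 0) ^ l i).prod *
          (σ 1) ^ n * σ 0 :=
  stmt_11_general m k l hk n hn
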